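/- arXiv:2109.10482 — 2 statements merged into one kernel-verified Lean document; each statement's English description precedes it below -/
import Mathlib

section
/- Let ψ_c and ψ_j be scale functions with ∫₀¹ ψ_c(s)/(s ψ_j(s)) ds < ∞, and define ψ̂_j(r) = ψ_c(r) / ∫₀^r ψ_c(s)/(s ψ_j(s)) ds for r > 0. Then there exists a constant C ≥ 1 such that ψ̂_j(r) ≤ C ψ_j(r) for all r > 0. -/
open Set MeasureTheory

/-- A scale function: a homeomorphism of `[0,∞)` (encoded as a continuous, strictly
monotone surjection of `Ici 0` onto itself fixing `0`) satisfying the two-sided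
power-type doubling estimate with constant `C ≥ 1` and exponents `0 < β₁ ≤ β₂`. -/
def IsScaleFunction (ψ : ℝ → ℝ) (C β₁ β₂ : ℝ) : Prop :=
  1 ≤ C ∧ 0 < β₁ ∧ β₁ ≤ β₂ ∧ ψ 0 = 0 ∧
  ContinuousOn ψ (Ici 0) ∧ StrictMonoOn ψ (Ici 0) ∧
  (∀ y, 0 ≤ y → ∃ x, 0 ≤ x ∧ ψ x = y) ∧
  ∀ r R : ℝ, 0 < r → r ≤ R →
    C⁻¹ * (R / r) ^ β₁ ≤ ψ R / ψ r ∧ ψ R / ψ r ≤ C * (R / r) ^ β₂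

/- On `(r/2, r)` the upper doubling bound for `ψc` and the monotonicity of `ψj` give
`ψc s / (s ψj s) ≥ ψc r / (C 2^β (r ψj r))`, so the integral over `(0, r)` is at least
`ψc r / (2 C 2^β ψj r)`. -/

namespace IsScaleFunction

variable {ψ : ℝ → ℝ} {C β₁ β₂ : ℝ}

theorem pos (hψ : IsScaleFunction ψ C β₁ β₂) {s : ℝ} (hs : 0 < s) : 0 < ψ s := by
  obtain ⟨-, -, -, h0, -, hmono, -⟩ := hψ
  simpa [h0] using hmono (mem_Ici.2 le_rfl) (mem_Ici.2 hs.le) hs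

theorem monotoneOn (hψ : IsScaleFunction ψ C β₁ β₂) : MonotoneOn ψ (Ici 0) :=
  hψ.2.2.2.2.2.1.monotoneOn

theorem continuousOn (hψ : IsScaleFunction ψ C β₁ β₂) : ContinuousOn ψ (Ici 0) :=
  hψ.2.2.2.2.1

theorem apply_le_mul_apply_of_le_two_mul (hψ : IsScaleFunction ψ C β₁ β₂) {s r : ℝ}
    (hs : 0 < s) (hsr : s ≤ r) (hrs : r ≤ 2 * s) : ψ r ≤ C * 2 ^ β₂ * ψ s := by
  obtain ⟨hC, hβ₁, hβ, -, -, -, -, hest⟩ := id hψ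
  have hpow : (r / s) ^ β₂ ≤ (2 : ℝ) ^ β₂ :=
    Real.rpow_le_rpow (div_nonneg (hs.le.trans hsr) hs.le) ((div_le_iff₀ hs).2 (by linarith))
      (hβ₁.le.trans hβ)
  calc ψ r = ψ r / ψ s * ψ s := (div_mul_cancel₀ _ (hψ.pos hs).ne').symm
    _ ≤ C * 2 ^ β₂ * ψ s := by
      have hC₀ : 0 ≤ C := zero_le_one.trans hC
      gcongr
      · exact (hψ.pos hs).le
      · exact (hest s r hs hsr).2.trans (by gcongr)

end IsScaleFunction

theorem integrableOn_Ioo_of_integrableOn_Ioo_one {f : ℝ → ℝ} (hcont : ContinuousOn f (Ioi 0))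
    (hf : IntegrableOn f (Ioo 0 1)) (r : ℝ) : IntegrableOn f (Ioo 0 r) := by
  rcases le_or_gt r 1 with hr | hr
  · exact hf.mono_set (Ioo_subset_Ioo_right hr)
  · have hIcc : IntegrableOn f (Icc 1 r) :=
      (hcont.mono fun x hx => zero_lt_one.trans_le hx.1).integrableOn_Icc
    refine (hf.union hIcc).mono_set ?_
    rw [Ioo_union_Icc_eq_Ioc zero_lt_one hr.le]
    exact Ioo_subset_Ioc_self

theorem mul_sub_le_setIntegral_Ioo {f : ℝ → ℝ} {a b c m : ℝ} (hf : IntegrableOn f (Ioo a b))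
    (hf₀ : ∀ s ∈ Ioo a b, 0 ≤ f s) (hac : a ≤ c) (hcb : c ≤ b) (hm : ∀ s ∈ Ioo c b, m ≤ f s) :
    m * (b - c) ≤ ∫ s in Ioo a b, f s := by
  have hsub : Ioo c b ⊆ Ioo a b := Ioo_subset_Ioo_left hac
  calc m * (b - c) = ∫ _ in Ioo c b, m := by
        rw [setIntegral_const, Real.volume_real_Ioo_of_le hcb, smul_eq_mul, mul_comm]
    _ ≤ ∫ s in Ioo c b, f s :=
        setIntegral_mono_on (integrableOn_const measure_Ioo_lt_top.ne) (hf.mono_set hsub)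
          measurableSet_Ioo hm
    _ ≤ ∫ s in Ioo a b, f s :=
        setIntegral_mono_set hf (ae_restrict_of_forall_mem measurableSet_Ioo hf₀)
          hsub.eventuallyLE

section

variable {ψc ψj : ℝ → ℝ} {Cc β₁c β₂c Cj β₁j β₂j : ℝ}

theorem integrand_pos (hψc : IsScaleFunction ψc Cc β₁c β₂c)
    (hψj : IsScaleFunction ψj Cj β₁j β₂j) {s : ℝ} (hs : 0 < s) : 0 < ψc s / (s * ψj s) :=
  div_pos (hψc.pos hs) (mul_pos hs (hψj.pos hs))

theorem continuousOn_integrand (hψc : IsScaleFunction ψc Cc β₁c β₂c)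
    (hψj : IsScaleFunction ψj Cj β₁j β₂j) : ContinuousOn (fun s => ψc s / (s * ψj s)) (Ioi 0) :=
  (hψc.continuousOn.mono Ioi_subset_Ici_self).div
    (continuousOn_id.mul (hψj.continuousOn.mono Ioi_subset_Ici_self))
    fun _ hs => (mul_pos hs (hψj.pos hs)).ne'

theorem le_integrand_of_mem_Ioo (hψc : IsScaleFunction ψc Cc β₁c β₂c)
    (hψj : IsScaleFunction ψj Cj β₁j β₂j) {r s : ℝ} (hs : s ∈ Ioo (r / 2) r) :
    ψc r / (Cc * 2 ^ β₂c * (r * ψj r)) ≤ ψc s / (s * ψj s) := by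
  have hs₀ : 0 < s := lt_trans (by linarith [hs.1, hs.2]) hs.1
  have hr : 0 < r := hs₀.trans hs.2
  have hCc : 0 < Cc := zero_lt_one.trans_le hψc.1
  have hψc_s := hψc.pos hs₀
  have hψj_s := hψj.pos hs₀
  have hψj_r := hψj.pos hr
  have hψc_le := hψc.apply_le_mul_apply_of_le_two_mul hs₀ hs.2.le (by linarith [hs.1])
  have hψj_le : ψj s ≤ ψj r := hψj.monotoneOn (mem_Ici.2 hs₀.le) (mem_Ici.2 hr.le) hs.2.le
  rw [div_le_div_iff₀ (by positivity) (by positivity)]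
  calc ψc r * (s * ψj s) ≤ (Cc * 2 ^ β₂c * ψc s) * (r * ψj r) :=
        mul_le_mul hψc_le (mul_le_mul hs.2.le hψj_le hψj_s.le hr.le) (by positivity)
          (by positivity)
    _ = ψc s * (Cc * 2 ^ β₂c * (r * ψj r)) := by ring

end

theorem hat_psi_j_le_psi_j (ψc ψj : ℝ → ℝ) (Cc β₁c β₂c Cj β₁j β₂j : ℝ)
    (hψc : IsScaleFunction ψc Cc β₁c β₂c)
    (hψj : IsScaleFunction ψj Cj β₁j β₂j)
    (hint : IntegrableOn (fun s => ψc s / (s * ψj s)) (Ioo 0 1) volume) :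
    (∀ r : ℝ, 0 < r → IntegrableOn (fun s => ψc s / (s * ψj s)) (Ioo 0 r) volume) ∧
    ∃ C : ℝ, 1 ≤ C ∧ ∀ r : ℝ, 0 < r →
      ψc r / (∫ s in Ioo 0 r, ψc s / (s * ψj s)) ≤ C * ψj r := by
  have hint_r := integrableOn_Ioo_of_integrableOn_Ioo_one (continuousOn_integrand hψc hψj) hint
  have hCc : 0 < Cc := zero_lt_one.trans_le hψc.1
  have hpow : 1 ≤ (2 : ℝ) ^ β₂c := Real.one_le_rpow one_le_two (hψc.2.1.le.trans hψc.2.2.1)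
  refine ⟨fun r _ => hint_r r, 2 * Cc * 2 ^ β₂c, by nlinarith [hψc.1], fun r hr => ?_⟩
  have hψc_r := hψc.pos hr
  have hψj_r := hψj.pos hr
  have hlower : ψc r / (Cc * 2 ^ β₂c * (r * ψj r)) * (r - r / 2) ≤
      ∫ s in Ioo 0 r, ψc s / (s * ψj s) :=
    mul_sub_le_setIntegral_Ioo (hint_r r) (fun s hs => (integrand_pos hψc hψj hs.1).le)
      (by linarith) (by linarith) fun _ => le_integrand_of_mem_Ioo hψc hψj
  rw [show ψc r / (Cc * 2 ^ β₂c * (r * ψj r)) * (r - r / 2) =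
      ψc r / (2 * Cc * 2 ^ β₂c * ψj r) by field_simp; ring] at hlower
  rw [div_le_iff₀ ((by positivity : (0 : ℝ) < _).trans_le hlower)]
  rwa [div_le_iff₀ (by positivity), mul_comm] at hlower
end

section
/- Let ψ_c, ψ_j be scale functions and let V : (0,∞) → (0,∞) be a function satisfying the doubling-type estimate c(R/r)^{α₁} ≤ V(R)/V(r) ≤ C(R/r)^{α₂} for 0 < r ≤ R with 0 < α₁ ≤ α₂. Fix d > 0 and suppose p : (0,∞) → [0,∞) satisfies p(t) ≤ C₁/V(ψ_c⁻¹(t)) · exp(−c₁ Φ(c₂ d, t)) for all t > 0, and p(t) ≥ c₃/V(ψ_c⁻¹(t)) for all t with d ≤ δ ψ_c⁻¹(t), where Φ(R,t) = sup_{r>0}(R/r − t/ψ_c(r)) and ψ_c has lower exponent β₁ > 1. Then ∫₀^∞ p(t)/(t ψ_j(ψ_c⁻¹(t))) dt ≍ 1/(V(d) ψ_j(d)), with comparison constants independent of d. -/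
/-!
Write `s = ψc⁻¹ t` and `W = V * ψj`; the product `W` again has power-type ratio bounds.
Taking `r = s` in `Φ(c₂ d, t)` gives `Φ ≥ c₂ d / s - 1` (finite since `β₁ > 1`), so the integrand
is at most `exp (-c₁ c₂ d / s) / (t W(s))` up to constants. For `t ≤ ψc d` (so `s ≤ d`) the
exponential beats every power of `d / s` and the integrand is `≲ 1 / (ψc d · W d)`; for
`t > ψc d` the lower growth of `W` makes it decay like `t ^ (-1 - θ)` for some `θ > 0`. Both pieces
integrate to `≲ 1 / W d`. For the lower bound, on `(T, 2T]` with `T = ψc (d / δ)` the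
near-diagonal bound applies and `s` is comparable to `d`, so this window alone contributes
`≳ 1 / W d`.
-/

open Set MeasureTheory

open Real

theorem rpow_mul_exp_neg_mul_le {γ ε x : ℝ} (hγ : 0 < γ) (hε : 0 < ε) (hx : 0 ≤ x) :
    x ^ γ * exp (-(ε * x)) ≤ (γ / ε) ^ γ := by
  set y := ε * x / γ
  have hy : 0 ≤ y := by positivity
  have key : x ^ γ * exp (-(ε * x)) = (γ / ε) ^ γ * (y * exp (-y)) ^ γ := by
    rw [Real.mul_rpow hy (exp_pos _).le, ← exp_mul, ← mul_assoc, ← Real.mul_rpow (by positivity) hy]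
    congr 2 <;> simp only [y] <;> field_simp
  rw [key]
  refine mul_le_of_le_one_right (by positivity) (rpow_le_one (by positivity) ?_ hγ.le)
  exact (mul_exp_neg_le_exp_neg_one y).trans (exp_le_one_iff.2 (by norm_num))

theorem mul_sub_mul_rpow_le {A a β w : ℝ} (hA : 0 ≤ A) (ha : 0 < a) (hβ : 1 < β) (hw : 0 ≤ w) :
    A * w - a * w ^ β ≤ A * (A / a) ^ (β - 1)⁻¹ := by
  set W := (A / a) ^ (β - 1)⁻¹
  have hW : 0 ≤ W := by positivity
  rcases le_or_gt w W with hwW | hWw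
  · nlinarith [mul_le_mul_of_nonneg_left hwW hA, rpow_nonneg hw β]
  · -- beyond `W` the power term dominates: `a * w ^ (β - 1) ≥ a * W ^ (β - 1) = A`
    have hw' : 0 < w := hW.trans_lt hWw
    have hpow : A ≤ a * w ^ (β - 1) := by
      calc A = a * W ^ (β - 1) := by
            rw [← rpow_mul (by positivity), inv_mul_cancel₀ (by linarith), rpow_one]
            field_simp
        _ ≤ a * w ^ (β - 1) := by gcongr
    have : a * w ^ β = a * w ^ (β - 1) * w := by
      rw [mul_assoc, ← rpow_add_one hw'.ne']; ring_nf
    nlinarith [mul_le_mul_of_nonneg_right hpow hw'.le, mul_nonneg hA hW]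

structure HasPowerRatioBounds (f : ℝ → ℝ) (c C α₁ α₂ : ℝ) : Prop where
  pos : ∀ {r : ℝ}, 0 < r → 0 < f r
  mul_rpow_le : ∀ {r R : ℝ}, 0 < r → r ≤ R → c * (R / r) ^ α₁ * f r ≤ f R
  le_mul_rpow : ∀ {r R : ℝ}, 0 < r → r ≤ R → f R ≤ C * (R / r) ^ α₂ * f r

namespace IsScaleFunction

variable {ψ : ℝ → ℝ} {C β₁ β₂ : ℝ}

theorem map_zero (hψ : IsScaleFunction ψ C β₁ β₂) : ψ 0 = 0 := hψ.2.2.2.1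

theorem strictMonoOn (hψ : IsScaleFunction ψ C β₁ β₂) : StrictMonoOn ψ (Ici 0) :=
  hψ.2.2.2.2.2.1

theorem exponent_pos (hψ : IsScaleFunction ψ C β₁ β₂) : 0 < β₁ := hψ.2.1

theorem exponent_le (hψ : IsScaleFunction ψ C β₁ β₂) : β₁ ≤ β₂ := hψ.2.2.1

theorem hasPowerRatioBounds (hψ : IsScaleFunction ψ C β₁ β₂) :
    HasPowerRatioBounds ψ C⁻¹ C β₁ β₂ := by
  obtain ⟨-, -, -, h0, -, hmono, -, hratio⟩ := hψ
  have hpos : ∀ {r : ℝ}, 0 < r → 0 < ψ r := fun {r} hr => by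
    simpa [h0] using hmono (mem_Ici.2 le_rfl) (mem_Ici.2 hr.le) hr
  exact ⟨hpos, fun hr hrR => (le_div_iff₀ (hpos hr)).1 (hratio _ _ hr hrR).1,
    fun hr hrR => (div_le_iff₀ (hpos hr)).1 (hratio _ _ hr hrR).2⟩

end IsScaleFunction

namespace HasPowerRatioBounds

variable {f g : ℝ → ℝ} {c C α₁ α₂ c' C' β₁ β₂ r R : ℝ}

theorem one_le (hf : HasPowerRatioBounds f c C α₁ α₂) : 1 ≤ C := by
  have := hf.le_mul_rpow one_pos le_rfl
  simp only [div_one, one_rpow, mul_one] at this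
  exact (le_mul_iff_one_le_left (hf.pos one_pos)).1 this

theorem const_pos (hf : HasPowerRatioBounds f c C α₁ α₂) : 0 < C := one_pos.trans_le hf.one_le

theorem mul (hf : HasPowerRatioBounds f c C α₁ α₂) (hg : HasPowerRatioBounds g c' C' β₁ β₂)
    (hc' : 0 ≤ c') :
    HasPowerRatioBounds (f * g) (c * c') (C * C') (α₁ + β₁) (α₂ + β₂) := by
  refine ⟨fun hr => mul_pos (hf.pos hr) (hg.pos hr), fun {r R} hr hrR => ?_, fun {r R} hr hrR => ?_⟩
  · have hRr : 0 < R / r := div_pos (hr.trans_le hrR) hr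
    calc c * c' * (R / r) ^ (α₁ + β₁) * (f * g) r
        = (c * (R / r) ^ α₁ * f r) * (c' * (R / r) ^ β₁ * g r) := by
          rw [rpow_add hRr, Pi.mul_apply]; ring
      _ ≤ f R * g R := mul_le_mul (hf.mul_rpow_le hr hrR) (hg.mul_rpow_le hr hrR)
          (by have := hg.pos hr; positivity) (hf.pos (hr.trans_le hrR)).le
  · have hRr : 0 < R / r := div_pos (hr.trans_le hrR) hr
    calc (f * g) R ≤ (C * (R / r) ^ α₂ * f r) * (C' * (R / r) ^ β₂ * g r) :=
          mul_le_mul (hf.le_mul_rpow hr hrR) (hg.le_mul_rpow hr hrR)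
            (hg.pos (hr.trans_le hrR)).le
            ((hf.pos (hr.trans_le hrR)).le.trans (hf.le_mul_rpow hr hrR))
      _ = C * C' * (R / r) ^ (α₂ + β₂) * (f * g) r := by
          rw [rpow_add hRr, Pi.mul_apply]; ring

theorem le_inv_mul_of_le (hf : HasPowerRatioBounds f c C α₁ α₂) (hc : 0 < c) (hα₁ : 0 ≤ α₁)
    (hr : 0 < r) (hrR : r ≤ R) : f r ≤ c⁻¹ * f R := by
  rw [le_inv_mul_iff₀ hc]
  calc c * f r = c * 1 * f r := by ring
    _ ≤ c * (R / r) ^ α₁ * f r := by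
        have := hf.pos hr
        gcongr
        exact one_le_rpow ((one_le_div hr).2 hrR) hα₁
    _ ≤ f R := hf.mul_rpow_le hr hrR

theorem le_max_mul_of_le_mul {κ : ℝ} (hf : HasPowerRatioBounds f c C α₁ α₂) (hc : 0 < c)
    (hα₁ : 0 ≤ α₁) (hα₂ : 0 ≤ α₂) (hr : 0 < r) (hR : 0 < R) (hRr : R ≤ κ * r) :
    f R ≤ max c⁻¹ (C * κ ^ α₂) * f r := by
  rcases le_or_gt R r with hle | hlt
  · have := hf.pos hr
    exact (hf.le_inv_mul_of_le hc hα₁ hR hle).trans (by gcongr; exact le_max_left _ _)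
  · calc f R ≤ C * (R / r) ^ α₂ * f r := hf.le_mul_rpow hr hlt.le
      _ ≤ C * κ ^ α₂ * f r := by
          have := hf.pos hr
          have := hf.const_pos
          gcongr
          rwa [div_le_iff₀ hr]
      _ ≤ max c⁻¹ (C * κ ^ α₂) * f r := by have := hf.pos hr; gcongr; exact le_max_right _ _

theorem rpow_inv_le_div (hf : HasPowerRatioBounds f c C α₁ α₂) (hα₂ : 0 < α₂) (hr : 0 < r)
    (hrR : r ≤ R) : (f R / (C * f r)) ^ α₂⁻¹ ≤ R / r := by
  have hC : 0 < C := hf.const_pos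
  have hfr := hf.pos hr
  have hRr : 0 ≤ R / r := div_nonneg (hr.le.trans hrR) hr.le
  calc (f R / (C * f r)) ^ α₂⁻¹ ≤ ((R / r) ^ α₂) ^ α₂⁻¹ := by
        gcongr
        · exact (div_pos (hf.pos (hr.trans_le hrR)) (by positivity)).le
        · rw [div_le_iff₀ (by positivity)]
          linarith [hf.le_mul_rpow hr hrR]
    _ = R / r := by rw [← rpow_mul hRr, mul_inv_cancel₀ hα₂.ne', rpow_one]

theorem le_rpow_mul_of_le_mul {L : ℝ} (hf : HasPowerRatioBounds f c C α₁ α₂) (hc : 0 < c)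
    (hα₁ : 0 < α₁) (hr : 0 < r) (hrR : r ≤ R) (hL : f R ≤ L * f r) :
    R ≤ (L / c) ^ α₁⁻¹ * r := by
  have hRr : 0 ≤ R / r := div_nonneg (hr.le.trans hrR) hr.le
  rw [← div_le_iff₀ hr]
  calc R / r = ((R / r) ^ α₁) ^ α₁⁻¹ := by rw [← rpow_mul hRr, mul_inv_cancel₀ hα₁.ne', rpow_one]
    _ ≤ (L / c) ^ α₁⁻¹ := by
        gcongr
        rw [le_div_iff₀ hc, mul_comm]
        exact le_of_mul_le_mul_right ((hf.mul_rpow_le hr hrR).trans hL) (hf.pos hr)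

theorem mul_rpow_div_le (hf : HasPowerRatioBounds f c C α₁ α₂)
    (hg : HasPowerRatioBounds g c' C' β₁ β₂) (hc : 0 ≤ c) (hα₁ : 0 ≤ α₁) (hβ₂ : 0 < β₂)
    (hr : 0 < r) (hrR : r ≤ R) : c * (g R / (C' * g r)) ^ (α₁ / β₂) * f r ≤ f R := by
  have hfr := hf.pos hr
  have hC' : 0 < C' := hg.const_pos
  have hgR := hg.pos (hr.trans_le hrR)
  have hgr := hg.pos hr
  calc c * (g R / (C' * g r)) ^ (α₁ / β₂) * f r
      = c * ((g R / (C' * g r)) ^ β₂⁻¹) ^ α₁ * f r := by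
        rw [← rpow_mul (by positivity), inv_mul_eq_div]
    _ ≤ c * (R / r) ^ α₁ * f r := by
        gcongr
        exact hg.rpow_inv_le_div hβ₂ hr hrR
    _ ≤ f R := hf.mul_rpow_le hr hrR

theorem exp_neg_div_le {ε : ℝ} (hf : HasPowerRatioBounds f c C α₁ α₂) (hα₂ : 0 < α₂)
    (hε : 0 < ε) (hr : 0 < r) (hrR : r ≤ R) :
    exp (-(ε * (R / r))) / f r ≤ C * (α₂ / ε) ^ α₂ / f R := by
  have hfr := hf.pos hr
  have hfR := hf.pos (hr.trans_le hrR)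
  have hC : 0 < C := hf.const_pos
  rw [div_le_div_iff₀ hfr hfR]
  calc exp (-(ε * (R / r))) * f R ≤ exp (-(ε * (R / r))) * (C * (R / r) ^ α₂ * f r) := by
        gcongr; exact hf.le_mul_rpow hr hrR
    _ = C * ((R / r) ^ α₂ * exp (-(ε * (R / r)))) * f r := by ring
    _ ≤ C * (α₂ / ε) ^ α₂ * f r := by
        gcongr
        exact rpow_mul_exp_neg_mul_le hα₂ hε (div_nonneg (hr.le.trans hrR) hr.le)

end HasPowerRatioBounds

section RightInverse

variable {ψ ψinv : ℝ → ℝ}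

theorem le_rightInv_iff (hψ : StrictMonoOn ψ (Ici 0)) (hinv : RightInvOn ψinv ψ (Ici 0))
    (hmaps : MapsTo ψinv (Ici 0) (Ici 0)) {x y : ℝ} (hx : 0 ≤ x) (hy : 0 ≤ y) :
    x ≤ ψinv y ↔ ψ x ≤ y := by
  rw [← hψ.le_iff_le hx (hmaps hy), hinv hy]

theorem rightInv_le_iff (hψ : StrictMonoOn ψ (Ici 0)) (hinv : RightInvOn ψinv ψ (Ici 0))
    (hmaps : MapsTo ψinv (Ici 0) (Ici 0)) {x y : ℝ} (hx : 0 ≤ x) (hy : 0 ≤ y) :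
    ψinv y ≤ x ↔ y ≤ ψ x := by
  rw [← hψ.le_iff_le (hmaps hy) hx, hinv hy]

theorem monotoneOn_rightInv (hψ : StrictMonoOn ψ (Ici 0)) (hinv : RightInvOn ψinv ψ (Ici 0))
    (hmaps : MapsTo ψinv (Ici 0) (Ici 0)) :
    MonotoneOn ψinv (Ici 0) := fun _ hx _ hy hxy =>
  (le_rightInv_iff hψ hinv hmaps (hmaps hx) hy).2 (by rwa [hinv hx])

theorem rightInv_pos (hinv : RightInvOn ψinv ψ (Ici 0)) (hmaps : MapsTo ψinv (Ici 0) (Ici 0))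
    (h0 : ψ 0 = 0) {y : ℝ} (hy : 0 < y) : 0 < ψinv y := by
  refine lt_of_le_of_ne (hmaps hy.le) fun h => ?_
  have := hinv (mem_Ici.2 hy.le)
  rw [← h, h0] at this
  exact hy.ne this

end RightInverse

-- `Φ(R, t)` of the heat kernel bounds; `sSup` returns the junk value `0` if the set is unbounded.
noncomputable def subGaussianExponent (ψ : ℝ → ℝ) (R t : ℝ) : ℝ :=
  sSup {x : ℝ | ∃ r : ℝ, 0 < r ∧ x = R / r - t / ψ r}

theorem div_sub_one_le_subGaussianExponent {ψ : ℝ → ℝ} {c C β₁ β₂ R s : ℝ}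
    (hψ : HasPowerRatioBounds ψ c C β₁ β₂) (hc : 0 < c) (hβ₁ : 1 < β₁) (hR : 0 ≤ R)
    (hs : 0 < s) : R / s - 1 ≤ subGaussianExponent ψ R (ψ s) := by
  refine le_csSup ⟨max (R / s) (R / s * (R / s / c) ^ (β₁ - 1)⁻¹), ?_⟩
    ⟨s, hs, by rw [div_self (hψ.pos hs).ne']⟩
  rintro x ⟨r, hr, rfl⟩
  have hψr := hψ.pos hr
  rcases le_or_gt s r with hsr | hrs
  · have : R / r ≤ R / s := div_le_div_of_nonneg_left hR hs hsr
    have : 0 ≤ ψ s / ψ r := div_nonneg (hψ.pos hs).le hψr.le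
    exact le_max_of_le_left (by linarith)
  · -- with `w = s / r > 1` the lower growth of `ψ` gives `R / r - ψ s / ψ r ≤ (R / s) w - c w ^ β₁`
    have hlow : c * (s / r) ^ β₁ ≤ ψ s / ψ r := by
      rw [le_div_iff₀ hψr]; exact hψ.mul_rpow_le hr hrs.le
    have hRr : R / r = R / s * (s / r) := by field_simp
    have := mul_sub_mul_rpow_le (div_nonneg hR hs.le) hc hβ₁ (div_nonneg hs.le hr.le)
    exact le_max_of_le_right (by linarith)

theorem exp_neg_mul_subGaussianExponent_le {ψ ψinv : ℝ → ℝ} {C β₁ β₂ R t a : ℝ}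
    (hψ : IsScaleFunction ψ C β₁ β₂) (hβ₁ : 1 < β₁) (hinv : RightInvOn ψinv ψ (Ici 0))
    (hmaps : MapsTo ψinv (Ici 0) (Ici 0)) (hR : 0 ≤ R) (ht : 0 < t) (ha : 0 ≤ a) :
    exp (-(a * subGaussianExponent ψ R t)) ≤ exp a * exp (-(a * (R / ψinv t))) := by
  have hΦ := div_sub_one_le_subGaussianExponent hψ.hasPowerRatioBounds
    (inv_pos.2 hψ.hasPowerRatioBounds.const_pos) hβ₁ hR (rightInv_pos hinv hmaps hψ.map_zero ht)
  rw [hinv ht.le] at hΦ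
  rw [← exp_add, exp_le_exp]
  nlinarith

theorem integrableOn_and_setIntegral_le_of_le {X : Type*} [MeasurableSpace X] {μ : Measure X}
    {F g : X → ℝ} {s : Set X} (hs : MeasurableSet s) (hF : AEStronglyMeasurable F (μ.restrict s))
    (hF0 : ∀ x ∈ s, 0 ≤ F x) (hFg : ∀ x ∈ s, F x ≤ g x) (hg : IntegrableOn g s μ) :
    IntegrableOn F s μ ∧ ∫ x in s, F x ∂μ ≤ ∫ x in s, g x ∂μ := by
  have hint : IntegrableOn F s μ := hg.mono' hF <| (ae_restrict_iff' hs).2 <| ae_of_all _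
    fun x hx => by rw [Real.norm_eq_abs, abs_of_nonneg (hF0 x hx)]; exact hFg x hx
  exact ⟨hint, setIntegral_mono_on hint hg hs hFg⟩

section IntegralEstimates

variable {ψ ψinv W F : ℝ → ℝ} {Cψ β₁ β₂ c C α₁ α₂ ε A d : ℝ}

theorem integrableOn_Ioc_and_setIntegral_le (hψ : IsScaleFunction ψ Cψ β₁ β₂)
    (hinv : RightInvOn ψinv ψ (Ici 0)) (hmaps : MapsTo ψinv (Ici 0) (Ici 0))
    (hW : HasPowerRatioBounds W c C α₁ α₂) (hc : 0 ≤ c) (hα₂ : 0 ≤ α₂) (hε : 0 < ε)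
    (hA : 0 ≤ A) (hd : 0 < d) (hF : AEStronglyMeasurable F (volume.restrict (Ioc 0 (ψ d))))
    (hF0 : ∀ t ∈ Ioc 0 (ψ d), 0 ≤ F t)
    (hFle : ∀ t ∈ Ioc 0 (ψ d), F t ≤ A * exp (-(ε * (d / ψinv t))) / (t * W (ψinv t))) :
    IntegrableOn F (Ioc 0 (ψ d)) ∧
      ∫ t in Ioc 0 (ψ d), F t ≤ A * (Cψ * C * ((β₂ + α₂) / ε) ^ (β₂ + α₂)) / W d := by
  have hψW := hψ.hasPowerRatioBounds.mul hW hc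
  have hT : 0 < ψ d := hψ.hasPowerRatioBounds.pos hd
  set K := Cψ * C * ((β₂ + α₂) / ε) ^ (β₂ + α₂)
  have hbound : ∀ t ∈ Ioc 0 (ψ d), F t ≤ A * K / W d / ψ d := by
    rintro t ⟨ht, htT⟩
    have hs := rightInv_pos hinv hmaps hψ.map_zero ht
    have hsd : ψinv t ≤ d := (rightInv_le_iff hψ.strictMonoOn hinv hmaps hd.le ht.le).2 htT
    have hψs : ψ (ψinv t) = t := hinv ht.le
    have key := hψW.exp_neg_div_le (by linarith [hψ.exponent_pos, hψ.exponent_le]) hε hs hsd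
    rw [Pi.mul_apply, Pi.mul_apply, hψs] at key
    calc F t ≤ A * (exp (-(ε * (d / ψinv t))) / (t * W (ψinv t))) := by
          rw [← mul_div_assoc]; exact hFle t ⟨ht, htT⟩
      _ ≤ A * (K / (ψ d * W d)) := by gcongr
      _ = A * K / W d / ψ d := by ring
  refine (integrableOn_and_setIntegral_le_of_le measurableSet_Ioc hF hF0 hbound
    (integrableOn_const measure_Ioc_lt_top.ne)).imp_right fun h => h.trans_eq ?_
  rw [setIntegral_const, Real.volume_real_Ioc_of_le hT.le, sub_zero, smul_eq_mul]
  field_simp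

theorem integrableOn_Ioi_and_setIntegral_le (hψ : IsScaleFunction ψ Cψ β₁ β₂)
    (hinv : RightInvOn ψinv ψ (Ici 0)) (hmaps : MapsTo ψinv (Ici 0) (Ici 0))
    (hW : HasPowerRatioBounds W c C α₁ α₂) (hc : 0 < c) (hα₁ : 0 < α₁) (hε : 0 ≤ ε)
    (hA : 0 ≤ A) (hd : 0 < d) (hF : AEStronglyMeasurable F (volume.restrict (Ioi (ψ d))))
    (hF0 : ∀ t ∈ Ioi (ψ d), 0 ≤ F t)
    (hFle : ∀ t ∈ Ioi (ψ d), F t ≤ A * exp (-(ε * (d / ψinv t))) / (t * W (ψinv t))) :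
    IntegrableOn F (Ioi (ψ d)) ∧
      ∫ t in Ioi (ψ d), F t ≤ A * Cψ ^ (α₁ / β₂) / (α₁ / β₂ * c) / W d := by
  have hβ₂ : 0 < β₂ := hψ.exponent_pos.trans_le hψ.exponent_le
  have hCψ : 0 < Cψ := hψ.hasPowerRatioBounds.const_pos
  set θ := α₁ / β₂
  have hθ : 0 < θ := div_pos hα₁ hβ₂
  have hT : 0 < ψ d := hψ.hasPowerRatioBounds.pos hd
  have hWd := hW.pos hd
  set B := A * (Cψ * ψ d) ^ θ / (c * W d)
  -- `t = ψ s` with `s ≥ d`, and `W` grows at least like `ψ ^ θ`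
  have hbound : ∀ t ∈ Ioi (ψ d), F t ≤ B * t ^ (-θ - 1) := by
    intro t htT
    have ht : 0 < t := hT.trans htT
    have hds : d ≤ ψinv t := (le_rightInv_iff hψ.strictMonoOn hinv hmaps hd.le ht.le).2 htT.le
    have hψs : ψ (ψinv t) = t := hinv ht.le
    have hgrowth := hW.mul_rpow_div_le hψ.hasPowerRatioBounds hc.le hα₁.le hβ₂ hd hds
    rw [hψs] at hgrowth
    have hexp : exp (-(ε * (d / ψinv t))) ≤ 1 :=
      exp_le_one_iff.2 (neg_nonpos.2 (by have := hd.trans_le hds; positivity))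
    calc F t ≤ A * exp (-(ε * (d / ψinv t))) / (t * W (ψinv t)) := hFle t htT
      _ ≤ A / (t * (c * (t / (Cψ * ψ d)) ^ θ * W d)) := by
          gcongr; exact mul_le_of_le_one_right hA hexp
      _ = B * t ^ (-θ - 1) := by
          rw [div_rpow ht.le (by positivity), sub_eq_add_neg, rpow_add ht, rpow_neg ht.le,
            rpow_neg_one]
          simp only [B]
          field_simp
  refine (integrableOn_and_setIntegral_le_of_le measurableSet_Ioi hF hF0 hbound
    ((integrableOn_Ioi_rpow_of_lt (by linarith) hT).const_mul B)).imp_right fun h => h.trans_eq ?_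
  rw [integral_const_mul, integral_Ioi_rpow_of_lt (by linarith) hT, show -θ - 1 + 1 = -θ by ring]
  simp only [B]
  rw [mul_rpow hCψ.le hT.le, rpow_neg hT.le]
  have := rpow_pos_of_pos hT θ
  field_simp

theorem exists_integral_le (hψ : IsScaleFunction ψ Cψ β₁ β₂)
    (hinv : RightInvOn ψinv ψ (Ici 0)) (hmaps : MapsTo ψinv (Ici 0) (Ici 0))
    (hW : HasPowerRatioBounds W c C α₁ α₂) (hc : 0 < c) (hα₁ : 0 < α₁) (hα₂ : 0 ≤ α₂)
    (hε : 0 < ε) (hA : 0 ≤ A) :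
    ∃ K, ∀ d, 0 < d → ∀ F : ℝ → ℝ, AEStronglyMeasurable F (volume.restrict (Ioi 0)) →
      (∀ t, 0 < t → 0 ≤ F t) →
      (∀ t, 0 < t → F t ≤ A * exp (-(ε * (d / ψinv t))) / (t * W (ψinv t))) →
      IntegrableOn F (Ioi 0) ∧ ∫ t in Ioi 0, F t ≤ K / W d := by
  refine ⟨A * (Cψ * C * ((β₂ + α₂) / ε) ^ (β₂ + α₂)) + A * Cψ ^ (α₁ / β₂) / (α₁ / β₂ * c),
    fun d hd F hF hF0 hFle => ?_⟩
  have hT : 0 < ψ d := hψ.hasPowerRatioBounds.pos hd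
  obtain ⟨hint₁, hI₁⟩ := integrableOn_Ioc_and_setIntegral_le hψ hinv hmaps hW hc.le hα₂ hε hA hd
    (hF.mono_measure (Measure.restrict_mono Ioc_subset_Ioi_self le_rfl))
    (fun t ht => hF0 t ht.1) (fun t ht => hFle t ht.1)
  obtain ⟨hint₂, hI₂⟩ := integrableOn_Ioi_and_setIntegral_le hψ hinv hmaps hW hc hα₁ hε.le hA hd
    (hF.mono_measure (Measure.restrict_mono (Ioi_subset_Ioi hT.le) le_rfl))
    (fun t ht => hF0 t (hT.trans ht)) (fun t ht => hFle t (hT.trans ht))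
  rw [← Ioc_union_Ioi_eq_Ioi hT.le]
  refine ⟨hint₁.union hint₂, ?_⟩
  rw [setIntegral_union (Ioc_disjoint_Ioi le_rfl) measurableSet_Ioi hint₁ hint₂, add_div]
  exact add_le_add hI₁ hI₂

theorem exists_le_integral (hψ : IsScaleFunction ψ Cψ β₁ β₂)
    (hinv : RightInvOn ψinv ψ (Ici 0)) (hmaps : MapsTo ψinv (Ici 0) (Ici 0))
    (hW : HasPowerRatioBounds W c C α₁ α₂) (hc : 0 < c) (hα₁ : 0 ≤ α₁) (hα₂ : 0 ≤ α₂)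
    {a δ : ℝ} (ha : 0 < a) (hδ : 0 < δ) :
    ∃ k, 0 < k ∧ ∀ d, 0 < d → ∀ F : ℝ → ℝ, IntegrableOn F (Ioi 0) → (∀ t, 0 < t → 0 ≤ F t) →
      (∀ t, 0 < t → d ≤ δ * ψinv t → a / (t * W (ψinv t)) ≤ F t) →
      k / W d ≤ ∫ t in Ioi 0, F t := by
  have hCψ : 0 < Cψ := hψ.hasPowerRatioBounds.const_pos
  set κ := (2 / Cψ⁻¹) ^ β₁⁻¹ / δ
  set M := max c⁻¹ (C * κ ^ α₂)
  have hM : 0 < M := (inv_pos.2 hc).trans_le (le_max_left _ _)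
  refine ⟨a / (2 * M), by positivity, fun d hd F hF hF0 hFge => ?_⟩
  have hdδ : 0 < d / δ := div_pos hd hδ
  set T := ψ (d / δ)
  have hT : 0 < T := hψ.hasPowerRatioBounds.pos hdδ
  have hWd := hW.pos hd
  -- on `(T, 2T]` the lower kernel bound applies and `s = ψinv t` lies in `[d / δ, κ d]`
  have hbound : ∀ t ∈ Ioc T (2 * T), a / (2 * T * (M * W d)) ≤ F t := by
    rintro t ⟨hTt, ht2T⟩
    have ht : 0 < t := hT.trans hTt
    have hs : d / δ ≤ ψinv t :=
      (le_rightInv_iff hψ.strictMonoOn hinv hmaps hdδ.le ht.le).2 hTt.le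
    have hs₀ : 0 < ψinv t := hdδ.trans_le hs
    have hsd : ψinv t ≤ κ * d := by
      refine (hψ.hasPowerRatioBounds.le_rpow_mul_of_le_mul (inv_pos.2 hCψ) hψ.exponent_pos hdδ hs
        (by rwa [hinv ht.le])).trans_eq ?_
      ring
    have hWs := hW.le_max_mul_of_le_mul hc hα₁ hα₂ hd hs₀ hsd
    calc a / (2 * T * (M * W d)) ≤ a / (t * W (ψinv t)) := by
          have := hW.pos hs₀
          gcongr
      _ ≤ F t := hFge t ht (by rw [div_le_iff₀ hδ] at hs; linarith)
  have hsub : Ioc T (2 * T) ⊆ Ioi 0 := fun t ht => hT.trans ht.1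
  calc a / (2 * M) / W d = ∫ _ in Ioc T (2 * T), a / (2 * T * (M * W d)) := by
        rw [setIntegral_const, Real.volume_real_Ioc_of_le (by linarith), smul_eq_mul]
        field_simp; ring
    _ ≤ ∫ t in Ioc T (2 * T), F t :=
        setIntegral_mono_on (integrableOn_const measure_Ioc_lt_top.ne) (hF.mono_set hsub)
          measurableSet_Ioc hbound
    _ ≤ ∫ t in Ioi 0, F t :=
        setIntegral_mono_set hF ((ae_restrict_iff' measurableSet_Ioi).2 (ae_of_all _ hF0))
          hsub.eventuallyLE

end IntegralEstimates

section KernelWeight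

variable {ψ ψinv V g : ℝ → ℝ} {Cψ β₁ β₂ c C α₁ α₂ Cg γ₁ γ₂ : ℝ}

theorem exists_integral_div_le (hψ : IsScaleFunction ψ Cψ β₁ β₂)
    (hinv : RightInvOn ψinv ψ (Ici 0)) (hmaps : MapsTo ψinv (Ici 0) (Ici 0))
    (hV : HasPowerRatioBounds V c C α₁ α₂) (hc : 0 < c) (hα₁ : 0 < α₁) (hα₂ : 0 ≤ α₂)
    (hg : IsScaleFunction g Cg γ₁ γ₂) {ε A : ℝ} (hε : 0 < ε) (hA : 0 ≤ A) :
    ∃ K, ∀ d, 0 < d → ∀ p : ℝ → ℝ, Measurable p → (∀ t, 0 < t → 0 ≤ p t) →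
      (∀ t, 0 < t → p t ≤ A / V (ψinv t) * exp (-(ε * (d / ψinv t)))) →
      IntegrableOn (fun t => p t / (t * g (ψinv t))) (Ioi 0) ∧
        ∫ t in Ioi 0, p t / (t * g (ψinv t)) ≤ K / (V d * g d) := by
  have hgb := hg.hasPowerRatioBounds
  have hCg : 0 < Cg := hgb.const_pos
  have hγ₁ := hg.exponent_pos
  have hγ₂ := hγ₁.trans_le hg.exponent_le
  obtain ⟨K, hK⟩ := exists_integral_le hψ hinv hmaps (hV.mul hgb (inv_nonneg.2 hCg.le))
    (by positivity) (by positivity) (by positivity) hε hA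
  refine ⟨K, fun d hd p hpm hp0 hpu => ?_⟩
  have hs : ∀ {t : ℝ}, 0 < t → 0 < ψinv t := rightInv_pos hinv hmaps hψ.map_zero
  have hmono : MonotoneOn (g ∘ ψinv) (Ioi 0) :=
    hg.strictMonoOn.monotoneOn.comp
      ((monotoneOn_rightInv hψ.strictMonoOn hinv hmaps).mono Ioi_subset_Ici_self)
      (hmaps.mono_left Ioi_subset_Ici_self)
  refine hK d hd _ (hpm.aemeasurable.div (aemeasurable_id.mul
    (aemeasurable_restrict_of_monotoneOn measurableSet_Ioi hmono))).aestronglyMeasurable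
    (fun t ht => div_nonneg (hp0 t ht) (mul_pos ht (hgb.pos (hs ht))).le) fun t ht => ?_
  have := hgb.pos (hs ht)
  calc p t / (t * g (ψinv t))
        ≤ A / V (ψinv t) * exp (-(ε * (d / ψinv t))) / (t * g (ψinv t)) := by
          gcongr; exact hpu t ht
    _ = A * exp (-(ε * (d / ψinv t))) / (t * (V * g) (ψinv t)) := by
        rw [Pi.mul_apply]; field_simp

theorem exists_le_integral_div (hψ : IsScaleFunction ψ Cψ β₁ β₂)
    (hinv : RightInvOn ψinv ψ (Ici 0)) (hmaps : MapsTo ψinv (Ici 0) (Ici 0))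
    (hV : HasPowerRatioBounds V c C α₁ α₂) (hc : 0 < c) (hα₁ : 0 ≤ α₁) (hα₂ : 0 ≤ α₂)
    (hg : IsScaleFunction g Cg γ₁ γ₂) {a δ : ℝ} (ha : 0 < a) (hδ : 0 < δ) :
    ∃ k, 0 < k ∧ ∀ d, 0 < d → ∀ p : ℝ → ℝ, (∀ t, 0 < t → 0 ≤ p t) →
      IntegrableOn (fun t => p t / (t * g (ψinv t))) (Ioi 0) →
      (∀ t, 0 < t → d ≤ δ * ψinv t → a / V (ψinv t) ≤ p t) →
      k / (V d * g d) ≤ ∫ t in Ioi 0, p t / (t * g (ψinv t)) := by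
  have hgb := hg.hasPowerRatioBounds
  have hCg : 0 < Cg := hgb.const_pos
  have hγ₁ := hg.exponent_pos
  have hγ₂ := hγ₁.trans_le hg.exponent_le
  obtain ⟨k, hk, hK⟩ := exists_le_integral hψ hinv hmaps (hV.mul hgb (inv_nonneg.2 hCg.le))
    (by positivity) (by positivity) (by positivity) ha hδ
  have hs : ∀ {t : ℝ}, 0 < t → 0 < ψinv t := rightInv_pos hinv hmaps hψ.map_zero
  refine ⟨k, hk, fun d hd p hp0 hint hpl => hK d hd _ hint
    (fun t ht => div_nonneg (hp0 t ht) (mul_pos ht (hgb.pos (hs ht))).le) fun t ht hdt => ?_⟩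
  have := hgb.pos (hs ht)
  calc a / (t * (V * g) (ψinv t)) = a / V (ψinv t) / (t * g (ψinv t)) := by
        rw [Pi.mul_apply]; field_simp
    _ ≤ p t / (t * g (ψinv t)) := by gcongr; exact hpl t ht hdt

end KernelWeight

theorem subordination_integral_estimate_general (ψc ψcinv ψj : ℝ → ℝ)
    (Cc β₁c β₂c Cj β₁j β₂j : ℝ)
    (hψc : IsScaleFunction ψc Cc β₁c β₂c) (hβ : 1 < β₁c)
    (hψj : IsScaleFunction ψj Cj β₁j β₂j)
    (hinv₂ : ∀ y, 0 ≤ y → ψc (ψcinv y) = y)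
    (hinv₃ : ∀ y, 0 ≤ y → 0 ≤ ψcinv y)
    (V : ℝ → ℝ) (c C α₁ α₂ : ℝ) (hc : 0 < c)
    (hα₁ : 0 < α₁) (hα₁₂ : α₁ ≤ α₂)
    (hVpos : ∀ r : ℝ, 0 < r → 0 < V r)
    (hV : ∀ r R : ℝ, 0 < r → r ≤ R →
      c * (R / r) ^ α₁ ≤ V R / V r ∧ V R / V r ≤ C * (R / r) ^ α₂)
    (C₁ c₁ c₂ c₃ δ : ℝ) (hC₁ : 0 < C₁) (hc₁ : 0 < c₁) (hc₂ : 0 < c₂)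
    (hc₃ : 0 < c₃) (hδ : 0 < δ) :
    ∃ K : ℝ, 1 ≤ K ∧ ∀ d : ℝ, 0 < d → ∀ p : ℝ → ℝ, Measurable p →
      (∀ t : ℝ, 0 < t → 0 ≤ p t) →
      (∀ t : ℝ, 0 < t → p t ≤ C₁ / V (ψcinv t) *
        Real.exp (-(c₁ * sSup {x : ℝ | ∃ r : ℝ, 0 < r ∧ x = c₂ * d / r - t / ψc r}))) →
      (∀ t : ℝ, 0 < t → d ≤ δ * ψcinv t → c₃ / V (ψcinv t) ≤ p t) →
      IntegrableOn (fun t => p t / (t * ψj (ψcinv t))) (Ioi 0) volume ∧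
      K⁻¹ * (1 / (V d * ψj d)) ≤ (∫ t in Ioi (0:ℝ), p t / (t * ψj (ψcinv t))) ∧
      (∫ t in Ioi (0:ℝ), p t / (t * ψj (ψcinv t))) ≤ K * (1 / (V d * ψj d)) := by
  have hinv : RightInvOn ψcinv ψc (Ici 0) := hinv₂
  have hmaps : MapsTo ψcinv (Ici 0) (Ici 0) := hinv₃
  have hVb : HasPowerRatioBounds V c C α₁ α₂ :=
    ⟨hVpos _, fun hr hrR => (le_div_iff₀ (hVpos _ hr)).1 (hV _ _ hr hrR).1,
      fun hr hrR => (div_le_iff₀ (hVpos _ hr)).1 (hV _ _ hr hrR).2⟩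
  obtain ⟨KU, hup⟩ := exists_integral_div_le hψc hinv hmaps hVb hc hα₁ (by linarith) hψj
    (mul_pos hc₁ hc₂) (by positivity : 0 ≤ C₁ * exp c₁)
  obtain ⟨KL, hKL, hlow⟩ :=
    exists_le_integral_div hψc hinv hmaps hVb hc hα₁.le (by linarith) hψj hc₃ hδ
  refine ⟨max 1 (max KU KL⁻¹), le_max_left _ _, fun d hd p hpm hp0 hpu hpl => ?_⟩
  have hexp : ∀ t, 0 < t →
      p t ≤ C₁ * exp c₁ / V (ψcinv t) * exp (-(c₁ * c₂ * (d / ψcinv t))) := fun t ht => by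
    have := hVpos _ (rightInv_pos hinv hmaps hψc.map_zero ht)
    calc p t ≤ C₁ / V (ψcinv t) * exp (-(c₁ * subGaussianExponent ψc (c₂ * d) t)) := hpu t ht
      _ ≤ C₁ / V (ψcinv t) * (exp c₁ * exp (-(c₁ * (c₂ * d / ψcinv t)))) := by
          gcongr
          exact exp_neg_mul_subGaussianExponent_le hψc hβ hinv hmaps (by positivity) ht hc₁.le
      _ = _ := by ring_nf
  obtain ⟨hint, hI⟩ := hup d hd p hpm hp0 hexp
  have hWd : 0 < V d * ψj d := mul_pos (hVpos d hd) (hψj.hasPowerRatioBounds.pos hd)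
  refine ⟨hint, le_trans ?_ (hlow d hd p hp0 hint hpl), hI.trans ?_⟩ <;> rw [mul_one_div] <;>
    gcongr
  · exact inv_le_of_inv_le₀ hKL (le_max_of_le_right (le_max_right _ _))
  · exact le_max_of_le_right (le_max_left _ _)

theorem subordination_integral_estimate (ψc ψcinv ψj : ℝ → ℝ)
    (Cc β₁c β₂c Cj β₁j β₂j : ℝ)
    (hψc : IsScaleFunction ψc Cc β₁c β₂c) (hβ : 1 < β₁c)
    (hψj : IsScaleFunction ψj Cj β₁j β₂j)
    (hinv₁ : ∀ x, 0 ≤ x → ψcinv (ψc x) = x)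
    (hinv₂ : ∀ y, 0 ≤ y → ψc (ψcinv y) = y)
    (hinv₃ : ∀ y, 0 ≤ y → 0 ≤ ψcinv y)
    (V : ℝ → ℝ) (c C α₁ α₂ : ℝ) (hc : 0 < c) (hC : 0 < C)
    (hα₁ : 0 < α₁) (hα₁₂ : α₁ ≤ α₂)
    (hVpos : ∀ r : ℝ, 0 < r → 0 < V r)
    (hV : ∀ r R : ℝ, 0 < r → r ≤ R →
      c * (R / r) ^ α₁ ≤ V R / V r ∧ V R / V r ≤ C * (R / r) ^ α₂)
    (C₁ c₁ c₂ c₃ δ : ℝ) (hC₁ : 0 < C₁) (hc₁ : 0 < c₁) (hc₂ : 0 < c₂)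
    (hc₃ : 0 < c₃) (hδ : 0 < δ) :
    ∃ K : ℝ, 1 ≤ K ∧ ∀ d : ℝ, 0 < d → ∀ p : ℝ → ℝ, Measurable p →
      (∀ t : ℝ, 0 < t → 0 ≤ p t) →
      (∀ t : ℝ, 0 < t → p t ≤ C₁ / V (ψcinv t) *
        Real.exp (-(c₁ * sSup {x : ℝ | ∃ r : ℝ, 0 < r ∧ x = c₂ * d / r - t / ψc r}))) →
      (∀ t : ℝ, 0 < t → d ≤ δ * ψcinv t → c₃ / V (ψcinv t) ≤ p t) →
      IntegrableOn (fun t => p t / (t * ψj (ψcinv t))) (Ioi 0) volume ∧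
      K⁻¹ * (1 / (V d * ψj d)) ≤ (∫ t in Ioi (0:ℝ), p t / (t * ψj (ψcinv t))) ∧
      (∫ t in Ioi (0:ℝ), p t / (t * ψj (ψcinv t))) ≤ K * (1 / (V d * ψj d)) :=
  subordination_integral_estimate_general ψc ψcinv ψj Cc β₁c β₂c Cj β₁j β₂j hψc hβ hψj hinv₂ hinv₃ V
    c C α₁ α₂ hc hα₁ hα₁₂ hVpos hV C₁ c₁ c₂ c₃ δ hC₁ hc₁ hc₂ hc₃ hδ
end
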